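/- arXiv:1709.08791 — 3 statements merged into one kernel-verified Lean document; each statement's English description precedes it below -/
import Mathlib

section
/- In any optimal solution of the two-resource proportional fairness problem max Σ_{u∈U} ln(R_{u,1} θ_u + R_{u,2} γ_u) subject to θ_u, γ_u ≥ 0, Σ_u θ_u ≤ 1, Σ_u γ_u ≤ 1, at most one user u can have both θ_u > 0 and γ_u > 0, provided the ratios R_{u,1}/R_{u,2} are pairwise distinct across users. -/
/-!
If two users `u ≠ v` both held positive shares of both resources, one could shift resource 1
from `u` to `v` and resource 2 from `v` to `u` (by amounts of either sign) without changing the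
totals. Since `R1 u / R2 u ≠ R1 v / R2 v`, the two rate changes form a nonsingular linear system
in the two amounts, so they can be chosen to raise both rates; a small enough multiple of this
exchange stays feasible and strictly increases the sum of logarithms, contradicting optimality.
-/

open Filter Topology

lemma exists_linear_system_two_eq {a b c d : ℝ} (hdet : a * d - b * c ≠ 0) (e f : ℝ) :
    ∃ x y : ℝ, a * x + b * y = e ∧ c * x + d * y = f :=
  ⟨(d * e - b * f) / (a * d - b * c), (a * f - c * e) / (a * d - b * c), by
    constructor <;>
    · rw [mul_div_assoc', mul_div_assoc', ← add_div, div_eq_iff hdet]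
      ring⟩

lemma eventually_nonneg_add_mul {a c : ℝ} (ha : 0 ≤ a) (hc : c ≠ 0 → 0 < a) :
    ∀ᶠ s in 𝓝 (0 : ℝ), 0 ≤ a + s * c := by
  rcases eq_or_ne c 0 with rfl | hc0
  · simp [ha]
  · have : Tendsto (fun s : ℝ => a + s * c) (𝓝 0) (𝓝 a) :=
      (continuous_const.add (continuous_id.mul continuous_const)).tendsto' 0 a (by simp)
    exact (this.eventually_const_lt (hc hc0)).mono fun _ => le_of_lt

lemma sum_log_lt_sum_log {ι : Type*} [Fintype ι] {f g : ι → ℝ} (hf : ∀ i, 0 < f i)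
    (hle : ∀ i, f i ≤ g i) (hlt : ∃ i, f i < g i) :
    ∑ i, Real.log (f i) < ∑ i, Real.log (g i) := by
  obtain ⟨i, hi⟩ := hlt
  exact Finset.sum_lt_sum (fun j _ => Real.log_le_log (hf j) (hle j))
    ⟨i, Finset.mem_univ i, Real.log_lt_log (hf i) hi⟩

lemma exists_feasible_sum_log_lt {ι : Type*} [Fintype ι] {R1 R2 θ γ dθ dγ : ι → ℝ}
    (hθ : ∀ w, 0 ≤ θ w) (hγ : ∀ w, 0 ≤ γ w)
    (hpos : ∀ w, 0 < R1 w * θ w + R2 w * γ w)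
    (hdθ : ∑ w, dθ w = 0) (hdγ : ∑ w, dγ w = 0)
    (hθsupp : ∀ w, dθ w ≠ 0 → 0 < θ w) (hγsupp : ∀ w, dγ w ≠ 0 → 0 < γ w)
    (hmono : ∀ w, 0 ≤ R1 w * dθ w + R2 w * dγ w)
    (hstrict : ∃ w, 0 < R1 w * dθ w + R2 w * dγ w) :
    ∃ θ' γ' : ι → ℝ, (∀ w, 0 ≤ θ' w) ∧ (∀ w, 0 ≤ γ' w) ∧
      ∑ w, θ' w = ∑ w, θ w ∧ ∑ w, γ' w = ∑ w, γ w ∧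
      (∀ w, 0 < R1 w * θ' w + R2 w * γ' w) ∧
      ∑ w, Real.log (R1 w * θ w + R2 w * γ w) <
        ∑ w, Real.log (R1 w * θ' w + R2 w * γ' w) := by
  have hfeas : ∀ᶠ s in 𝓝[>] (0 : ℝ),
      0 < s ∧ (∀ w, 0 ≤ θ w + s * dθ w) ∧ ∀ w, 0 ≤ γ w + s * dγ w :=
    eventually_mem_nhdsWithin.and <| nhdsWithin_le_nhds <|
      (eventually_all.2 fun w => eventually_nonneg_add_mul (hθ w) (hθsupp w)).and
        (eventually_all.2 fun w => eventually_nonneg_add_mul (hγ w) (hγsupp w))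
  obtain ⟨s, hs, hθ', hγ'⟩ := hfeas.exists
  have hrate : ∀ w, R1 w * (θ w + s * dθ w) + R2 w * (γ w + s * dγ w) =
      R1 w * θ w + R2 w * γ w + s * (R1 w * dθ w + R2 w * dγ w) := fun w => by ring
  have hle : ∀ w, R1 w * θ w + R2 w * γ w ≤ R1 w * (θ w + s * dθ w) + R2 w * (γ w + s * dγ w) :=
    fun w => (hrate w).symm ▸ le_add_of_nonneg_right (mul_nonneg hs.le (hmono w))
  obtain ⟨w₀, hw₀⟩ := hstrict
  refine ⟨fun w => θ w + s * dθ w, fun w => γ w + s * dγ w, hθ', hγ', ?_, ?_,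
    fun w => (hpos w).trans_le (hle w), sum_log_lt_sum_log hpos hle ⟨w₀, ?_⟩⟩
  · simp [Finset.sum_add_distrib, ← Finset.mul_sum, hdθ]
  · simp [Finset.sum_add_distrib, ← Finset.mul_sum, hdγ]
  · rw [hrate]
    exact lt_add_of_pos_right _ (mul_pos hs hw₀)

lemma exists_exchange_direction {ι : Type*} [Fintype ι] [DecidableEq ι] {R1 R2 : ι → ℝ}
    {u v : ι} (huv : u ≠ v) (hdet : R1 u * R2 v ≠ R1 v * R2 u) :
    ∃ dθ dγ : ι → ℝ, ∑ w, dθ w = 0 ∧ ∑ w, dγ w = 0 ∧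
      (∀ w, dθ w ≠ 0 ∨ dγ w ≠ 0 → w = u ∨ w = v) ∧
      (∀ w, 0 ≤ R1 w * dθ w + R2 w * dγ w) ∧ 0 < R1 u * dθ u + R2 u * dγ u := by
  obtain ⟨x, y, hu, hv⟩ := exists_linear_system_two_eq (a := -R1 u) (b := R2 u) (c := R1 v)
    (d := -R2 v) (by rw [neg_mul_neg, mul_comm (R2 u)]; exact sub_ne_zero.2 hdet) 1 1
  -- `x` of resource 1 moves from `u` to `v`, `y` of resource 2 from `v` to `u`; both rates grow by 1.
  refine ⟨Pi.single v x - Pi.single u x, Pi.single u y - Pi.single v y, by simp, by simp,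
    fun w hw => ?_, fun w => ?_, ?_⟩
  · by_contra! h
    simp [h.1, h.2] at hw
  · rcases eq_or_ne w u with rfl | hwu
    · simp only [Pi.sub_apply, Pi.single_eq_same, Pi.single_eq_of_ne huv]; linarith
    rcases eq_or_ne w v with rfl | hwv
    · simp only [Pi.sub_apply, Pi.single_eq_same, Pi.single_eq_of_ne hwu]; linarith
    simp [hwu, hwv]
  · simp only [Pi.sub_apply, Pi.single_eq_same, Pi.single_eq_of_ne huv]; linarith

theorem at_most_one_dual_user_general {ι : Type*} [Fintype ι]
    (R1 R2 : ι → ℝ) (hR2 : ∀ u, 0 < R2 u)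
    (hdist : ∀ u v : ι, u ≠ v → R1 u / R2 u ≠ R1 v / R2 v)
    (θ γ : ι → ℝ)
    (hθ : ∀ u, 0 ≤ θ u) (hγ : ∀ u, 0 ≤ γ u)
    (hθs : (∑ u, θ u) ≤ 1) (hγs : (∑ u, γ u) ≤ 1)
    (hpos : ∀ u, 0 < R1 u * θ u + R2 u * γ u)
    (hopt : ∀ θ' γ' : ι → ℝ, (∀ u, 0 ≤ θ' u) → (∀ u, 0 ≤ γ' u) →
      (∑ u, θ' u) ≤ 1 → (∑ u, γ' u) ≤ 1 →
      (∀ u, 0 < R1 u * θ' u + R2 u * γ' u) →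
      (∑ u, Real.log (R1 u * θ' u + R2 u * γ' u)) ≤
        ∑ u, Real.log (R1 u * θ u + R2 u * γ u)) :
    ∀ u v : ι, u ≠ v → ¬(0 < θ u ∧ 0 < γ u ∧ 0 < θ v ∧ 0 < γ v) := by
  classical
  rintro u v huv ⟨hθu, hγu, hθv, hγv⟩
  have hdet : R1 u * R2 v ≠ R1 v * R2 u :=
    mt (div_eq_div_iff (hR2 u).ne' (hR2 v).ne').2 (hdist u v huv)
  obtain ⟨dθ, dγ, hdθ, hdγ, hsupp, hmono, hstrict⟩ := exists_exchange_direction huv hdet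
  have hsupp_pos (w) (hw : dθ w ≠ 0 ∨ dγ w ≠ 0) : 0 < θ w ∧ 0 < γ w := by
    rcases hsupp w hw with rfl | rfl <;> tauto
  obtain ⟨θ', γ', hθ', hγ', hθs', hγs', hpos', hlt⟩ := exists_feasible_sum_log_lt hθ hγ hpos
    hdθ hdγ (fun w h => (hsupp_pos w (.inl h)).1) (fun w h => (hsupp_pos w (.inr h)).2)
    hmono ⟨u, hstrict⟩
  exact (hopt θ' γ' hθ' hγ' (hθs'.trans_le hθs) (hγs'.trans_le hγs) hpos').not_gt hlt

theorem at_most_one_dual_user {ι : Type*} [Fintype ι]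
    (hcard : 2 ≤ Fintype.card ι)
    (R1 R2 : ι → ℝ) (hR1 : ∀ u, 0 < R1 u) (hR2 : ∀ u, 0 < R2 u)
    (hdist : ∀ u v : ι, u ≠ v → R1 u / R2 u ≠ R1 v / R2 v)
    (θ γ : ι → ℝ)
    (hθ : ∀ u, 0 ≤ θ u) (hγ : ∀ u, 0 ≤ γ u)
    (hθs : (∑ u, θ u) ≤ 1) (hγs : (∑ u, γ u) ≤ 1)
    (hpos : ∀ u, 0 < R1 u * θ u + R2 u * γ u)
    (hopt : ∀ θ' γ' : ι → ℝ, (∀ u, 0 ≤ θ' u) → (∀ u, 0 ≤ γ' u) →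
      (∑ u, θ' u) ≤ 1 → (∑ u, γ' u) ≤ 1 →
      (∀ u, 0 < R1 u * θ' u + R2 u * γ' u) →
      (∑ u, Real.log (R1 u * θ' u + R2 u * γ' u)) ≤
        ∑ u, Real.log (R1 u * θ u + R2 u * γ u)) :
    ∀ u v : ι, u ≠ v → ¬(0 < θ u ∧ 0 < γ u ∧ 0 < θ v ∧ 0 < γ v) :=
  at_most_one_dual_user_general R1 R2 hR2 hdist θ γ hθ hγ hθs hγs hpos hopt
end

section
/- Slack ordering for weighted sum rate: in the LP of maximizing Σ_u w_u(R_{u,1}θ_u + R_{u,2}γ_u) with budgets Σθ_u ≤ Γ, Σγ_u ≤ Γ₂ and rate bounds R_u := R_{u,1}θ_u + R_{u,2}γ_u ∈ [r_u^min, r_u^max], any optimal solution satisfies: for distinct users k, j with w_k R_{k,2} > w_j R_{j,2}, if R_j > r_j^min and γ_j > 0, then R_k = r_k^max. -/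
/-!
Suppose user `j` has slack above its minimum rate and positive `γ j`, while user `k` is below its
maximum rate. Shifting a small amount `ε > 0` of the second budget from `γ j` to `γ k` keeps every
constraint satisfied (the sum of `γ` is unchanged, and only the rates of `j` and `k` move, each
towards a bound it has slack at) and changes the objective by `ε (w k R2 k - w j R2 j) > 0`,
contradicting optimality.
-/

open Filter Topology Set Finset

lemma eventually_le_add_mul {x d lo : ℝ} (hx : lo ≤ x) (hd : d < 0 → lo < x) :
    ∀ᶠ ε in 𝓝[>] 0, lo ≤ x + ε * d := by
  rcases lt_or_ge d 0 with hneg | hnonneg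
  · have hcont : Tendsto (fun ε => x + ε * d) (𝓝 0) (𝓝 x) := by
      simpa using ((tendsto_id (x := 𝓝 (0 : ℝ))).mul_const d).const_add x
    exact nhdsWithin_le_nhds (hcont.eventually (eventually_ge_nhds (hd hneg)))
  · filter_upwards [self_mem_nhdsWithin] with ε hε
    nlinarith [mul_nonneg (le_of_lt hε) hnonneg]

lemma eventually_add_mul_mem_Icc {x d lo hi : ℝ} (hx : x ∈ Icc lo hi)
    (hlo : d < 0 → lo < x) (hhi : 0 < d → x < hi) :
    ∀ᶠ ε in 𝓝[>] 0, x + ε * d ∈ Icc lo hi := by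
  have hupper : ∀ᶠ ε in 𝓝[>] 0, -hi ≤ -x + ε * -d :=
    eventually_le_add_mul (neg_le_neg hx.2) fun h => neg_lt_neg (hhi (neg_neg_iff_pos.mp h))
  filter_upwards [eventually_le_add_mul hx.1 hlo, hupper] with ε hlo' hhi'
  exact ⟨hlo', by linarith⟩

section ExchangeDir

variable {ι : Type*} [DecidableEq ι]

def exchangeDir (k j : ι) : ι → ℝ := Pi.single k 1 - Pi.single j 1

lemma sum_mul_exchangeDir [Fintype ι] (c : ι → ℝ) (k j : ι) :
    ∑ u, c u * exchangeDir k j u = c k - c j := by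
  simp [exchangeDir, Pi.single_apply, mul_sub, sum_sub_distrib]

lemma sum_exchangeDir [Fintype ι] (k j : ι) : ∑ u, exchangeDir k j u = 0 := by
  simpa using sum_mul_exchangeDir (fun _ => 1) k j

lemma eq_right_of_exchangeDir_neg {k j u : ι} (h : exchangeDir k j u < 0) : u = j := by
  by_contra hu
  simp only [exchangeDir, Pi.sub_apply, Pi.single_apply, if_neg hu, sub_zero] at h
  split_ifs at h <;> norm_num at h

lemma eq_left_of_exchangeDir_pos {k j u : ι} (h : 0 < exchangeDir k j u) : u = k := by
  by_contra hu
  simp only [exchangeDir, Pi.sub_apply, Pi.single_apply, if_neg hu, zero_sub] at h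
  split_ifs at h <;> norm_num at h

end ExchangeDir

theorem wsr_slack_ordering_general {ι : Type*} [Fintype ι]
    (w R1 R2 rmin rmax : ι → ℝ)
    (hR2 : ∀ u, 0 < R2 u)
    (Γ Γ₂ : ℝ)
    (θ γ : ι → ℝ)
    (hθ : ∀ u, 0 ≤ θ u) (hγ : ∀ u, 0 ≤ γ u)
    (hθs : (∑ u, θ u) ≤ Γ) (hγs : (∑ u, γ u) ≤ Γ₂)
    (hrate : ∀ u, R1 u * θ u + R2 u * γ u ∈ Set.Icc (rmin u) (rmax u))
    (hopt : ∀ θ' γ' : ι → ℝ, (∀ u, 0 ≤ θ' u) → (∀ u, 0 ≤ γ' u) →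
      (∑ u, θ' u) ≤ Γ → (∑ u, γ' u) ≤ Γ₂ →
      (∀ u, R1 u * θ' u + R2 u * γ' u ∈ Set.Icc (rmin u) (rmax u)) →
      (∑ u, w u * (R1 u * θ' u + R2 u * γ' u)) ≤
        ∑ u, w u * (R1 u * θ u + R2 u * γ u)) :
    ∀ k j : ι, k ≠ j → w k * R2 k > w j * R2 j →
      rmin j < R1 j * θ j + R2 j * γ j → 0 < γ j →
      R1 k * θ k + R2 k * γ k = rmax k := by
  classical
  intro k j hkj hwR hslack hγj
  by_contra hne
  set d := exchangeDir k j
  have hfeas : ∀ᶠ ε in 𝓝[>] 0, ∀ u, 0 ≤ γ u + ε * d u ∧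
      R1 u * θ u + R2 u * (γ u + ε * d u) ∈ Icc (rmin u) (rmax u) := by
    refine eventually_all.2 fun u => ?_
    have hγu : ∀ᶠ ε in 𝓝[>] 0, 0 ≤ γ u + ε * d u :=
      eventually_le_add_mul (hγ u) fun h => eq_right_of_exchangeDir_neg h ▸ hγj
    have hrateu := eventually_add_mul_mem_Icc (d := R2 u * d u) (hrate u)
      (fun h => eq_right_of_exchangeDir_neg (neg_of_mul_neg_right h (hR2 u).le) ▸ hslack)
      (fun h => eq_left_of_exchangeDir_pos ((mul_pos_iff_of_pos_left (hR2 u)).1 h) ▸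
        lt_of_le_of_ne (hrate k).2 hne)
    filter_upwards [hγu, hrateu] with ε hγε hrateε
    exact ⟨hγε, by convert hrateε using 1; ring⟩
  obtain ⟨ε, hfeasε, hε⟩ := (hfeas.and self_mem_nhdsWithin).exists
  have hsum : ∑ u, (γ u + ε * d u) = ∑ u, γ u := by
    rw [sum_add_distrib, ← mul_sum, sum_exchangeDir, mul_zero, add_zero]
  have hobj : ∑ u, w u * (R1 u * θ u + R2 u * (γ u + ε * d u)) =
      ∑ u, w u * (R1 u * θ u + R2 u * γ u) + ε * (w k * R2 k - w j * R2 j) := by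
    rw [← sum_mul_exchangeDir (fun u => w u * R2 u), mul_sum, ← sum_add_distrib]
    exact sum_congr rfl fun u _ => by ring
  have hle := hopt θ (fun u => γ u + ε * d u) hθ (fun u => (hfeasε u).1) hθs (hsum ▸ hγs)
    fun u => (hfeasε u).2
  rw [hobj] at hle
  nlinarith [mul_pos (Set.mem_Ioi.1 hε) (sub_pos.2 hwR)]

theorem wsr_slack_ordering {ι : Type*} [Fintype ι]
    (w R1 R2 rmin rmax : ι → ℝ)
    (hw : ∀ u, 0 < w u) (hR1 : ∀ u, 0 < R1 u) (hR2 : ∀ u, 0 < R2 u)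
    (hr : ∀ u, 0 ≤ rmin u ∧ rmin u ≤ rmax u)
    (Γ Γ₂ : ℝ) (hΓ : 0 ≤ Γ) (hΓ₂ : 0 ≤ Γ₂)
    (θ γ : ι → ℝ)
    (hθ : ∀ u, 0 ≤ θ u) (hγ : ∀ u, 0 ≤ γ u)
    (hθs : (∑ u, θ u) ≤ Γ) (hγs : (∑ u, γ u) ≤ Γ₂)
    (hrate : ∀ u, R1 u * θ u + R2 u * γ u ∈ Set.Icc (rmin u) (rmax u))
    (hopt : ∀ θ' γ' : ι → ℝ, (∀ u, 0 ≤ θ' u) → (∀ u, 0 ≤ γ' u) →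
      (∑ u, θ' u) ≤ Γ → (∑ u, γ' u) ≤ Γ₂ →
      (∀ u, R1 u * θ' u + R2 u * γ' u ∈ Set.Icc (rmin u) (rmax u)) →
      (∑ u, w u * (R1 u * θ' u + R2 u * γ' u)) ≤
        ∑ u, w u * (R1 u * θ u + R2 u * γ u)) :
    ∀ k j : ι, k ≠ j → w k * R2 k > w j * R2 j →
      rmin j < R1 j * θ j + R2 j * γ j → 0 < γ j →
      R1 k * θ k + R2 k * γ k = rmax k :=
  wsr_slack_ordering_general w R1 R2 rmin rmax hR2 Γ Γ₂ θ γ hθ hγ hθs hγs hrate hopt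
end

section
/- If in the proportional fairness problem max Σ_{u∈U'} Σ_{b} x_{u,b} ln(R_{u,1}θ_u + R_{u,b}γ_{u,b}) (with one macro and pico set B', macro budget Σ_u θ_u ≤ 1, per-pico budgets Σ_{u: x_{u,b}=1} γ_{u,b} ≤ 1) every optimal solution has, for each pico b, at most one user served by both macro and pico b, then restricting to orthogonal solutions (θ_u γ_{u,b} = 0 for all u, b) loses at most min(|B'|, |U'|)·ln 2 in objective value. -/
/-!
Take an optimal allocation and let every user keep only the link with the larger rate. The result
is orthogonal and still feasible, and a user's rate drops at most by half, i.e. its utility by at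
most `log 2`, and only if it was split between the macro and its pico. By hypothesis the split users
have pairwise distinct picos, so there are at most `min |B'| |U'|` of them.
-/

open Real Finset

namespace Real

theorem log_add_le_log_max_add_log_two {a c : ℝ} (h : 0 < a + c) :
    log (a + c) ≤ log (max a c) + log 2 := by
  have hsum : a + c ≤ max a c * 2 := by linarith [le_max_left a c, le_max_right a c]
  rw [← log_mul (by linarith) two_ne_zero]
  exact log_le_log h hsum

theorem log_add_eq_log_max_of_eq_zero_or_eq_zero {a c : ℝ} (h : 0 < a + c)
    (hac : a = 0 ∨ c = 0) : log (a + c) = log (max a c) := by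
  rcases hac with rfl | rfl
  · rw [zero_add] at h ⊢; rw [max_eq_right h.le]
  · rw [add_zero] at h ⊢; rw [max_eq_left h.le]

theorem sum_log_add_le_sum_log_max_add_card_mul_log_two {ι : Type*} [Fintype ι] [DecidableEq ι]
    {a c : ι → ℝ} {s : Finset ι} (hpos : ∀ u, 0 < a u + c u) (hs : ∀ u ∉ s, a u = 0 ∨ c u = 0) :
    ∑ u, log (a u + c u) ≤ ∑ u, log (max (a u) (c u)) + #s * log 2 := by
  have hterm : ∀ u, log (a u + c u) ≤ log (max (a u) (c u)) + if u ∈ s then log 2 else 0 := by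
    intro u
    split_ifs with hu
    · exact log_add_le_log_max_add_log_two (hpos u)
    · rw [add_zero, log_add_eq_log_max_of_eq_zero_or_eq_zero (hpos u) (hs u hu)]
  calc ∑ u, log (a u + c u)
      ≤ ∑ u, (log (max (a u) (c u)) + if u ∈ s then log 2 else 0) := sum_le_sum fun u _ => hterm u
    _ = ∑ u, log (max (a u) (c u)) + #s * log 2 := by
      rw [sum_add_distrib, sum_ite_mem, univ_inter, sum_const, nsmul_eq_mul]

end Real

theorem Finset.card_le_min_card_of_injOn {ι β : Type*} [Fintype ι] [Fintype β] {s : Finset ι}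
    (f : ι → β) (hf : Set.InjOn f s) : #s ≤ min (Fintype.card β) (Fintype.card ι) :=
  le_min (by simpa using card_le_card_of_injOn f (fun u _ => mem_univ (f u)) hf) (card_le_univ s)

section ProportionalFairness

variable {ι β : Type*}

noncomputable def orthTheta (R1 Rp θ γ : ι → ℝ) (u : ι) : ℝ :=
  if Rp u * γ u ≤ R1 u * θ u then θ u else 0

noncomputable def orthGamma (R1 Rp θ γ : ι → ℝ) (u : ι) : ℝ :=
  if Rp u * γ u ≤ R1 u * θ u then 0 else γ u

variable {R1 Rp θ γ : ι → ℝ}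

theorem orthTheta_mul_orthGamma (u : ι) : orthTheta R1 Rp θ γ u * orthGamma R1 Rp θ γ u = 0 := by
  unfold orthTheta orthGamma; split_ifs <;> simp

theorem mul_orthTheta_add_mul_orthGamma (u : ι) :
    R1 u * orthTheta R1 Rp θ γ u + Rp u * orthGamma R1 Rp θ γ u =
      max (R1 u * θ u) (Rp u * γ u) := by
  unfold orthTheta orthGamma
  split_ifs with h
  · rw [mul_zero, add_zero, max_eq_left h]
  · rw [mul_zero, zero_add, max_eq_right (not_le.mp h).le]

theorem orthTheta_le_self (hθ : ∀ u, 0 ≤ θ u) (u : ι) : orthTheta R1 Rp θ γ u ≤ θ u := by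
  unfold orthTheta; split_ifs <;> first | exact le_rfl | exact hθ u

theorem orthGamma_le_self (hγ : ∀ u, 0 ≤ γ u) (u : ι) : orthGamma R1 Rp θ γ u ≤ γ u := by
  unfold orthGamma; split_ifs <;> first | exact le_rfl | exact hγ u

theorem orthTheta_nonneg (hθ : ∀ u, 0 ≤ θ u) (u : ι) : 0 ≤ orthTheta R1 Rp θ γ u := by
  unfold orthTheta; split_ifs <;> first | exact le_rfl | exact hθ u

theorem orthGamma_nonneg (hγ : ∀ u, 0 ≤ γ u) (u : ι) : 0 ≤ orthGamma R1 Rp θ γ u := by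
  unfold orthGamma; split_ifs <;> first | exact le_rfl | exact hγ u

variable [Fintype ι] [DecidableEq β]

noncomputable def splitUsers (θ γ : ι → ℝ) : Finset ι := {u | 0 < θ u ∧ 0 < γ u}

/-- `θ u` is the macro share and `γ u` the share of the pico `assoc u` given to user `u`. -/
def PFFeasible (assoc : ι → β) (R1 Rp θ γ : ι → ℝ) : Prop :=
  (∀ u, 0 ≤ θ u) ∧ (∀ u, 0 ≤ γ u) ∧
    (∑ u, θ u) ≤ 1 ∧
    (∀ b : β, (∑ u ∈ Finset.univ.filter (fun u => assoc u = b), γ u) ≤ 1) ∧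
    ∀ u, 0 < R1 u * θ u + Rp u * γ u

theorem PFFeasible.orthTheta_orthGamma {assoc : ι → β} (h : PFFeasible assoc R1 Rp θ γ) :
    PFFeasible assoc R1 Rp (orthTheta R1 Rp θ γ) (orthGamma R1 Rp θ γ) := by
  obtain ⟨hθ, hγ, hθsum, hγsum, hpos⟩ := h
  refine ⟨orthTheta_nonneg hθ, orthGamma_nonneg hγ, ?_, fun b => ?_, fun u => ?_⟩
  · exact (sum_le_sum fun u _ => orthTheta_le_self hθ u).trans hθsum
  · exact (sum_le_sum fun u _ => orthGamma_le_self hγ u).trans (hγsum b)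
  · rw [mul_orthTheta_add_mul_orthGamma]
    linarith [hpos u, le_max_left (R1 u * θ u) (Rp u * γ u), le_max_right (R1 u * θ u) (Rp u * γ u)]

theorem PFFeasible.sum_log_le_sum_log_orth_add [DecidableEq ι] {assoc : ι → β}
    (h : PFFeasible assoc R1 Rp θ γ) :
    ∑ u, log (R1 u * θ u + Rp u * γ u) ≤
      ∑ u, log (R1 u * orthTheta R1 Rp θ γ u + Rp u * orthGamma R1 Rp θ γ u) +
        #(splitUsers θ γ) * log 2 := by
  obtain ⟨hθ, hγ, -, -, hpos⟩ := h
  simp_rw [mul_orthTheta_add_mul_orthGamma]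
  refine sum_log_add_le_sum_log_max_add_card_mul_log_two hpos fun u hu => ?_
  simp only [splitUsers, mem_filter, mem_univ, true_and, not_and, not_lt] at hu
  rcases (hθ u).eq_or_lt with hθu | hθu
  · exact Or.inl (by rw [← hθu, mul_zero])
  · exact Or.inr (by rw [le_antisymm (hu hθu) (hγ u), mul_zero])

end ProportionalFairness

theorem orthogonal_split_loss_general {ι β : Type*} [Fintype ι] [Fintype β] [DecidableEq β]
    (assoc : ι → β)
    (R1 Rp : ι → ℝ)
    (Feas : (ι → ℝ) → (ι → ℝ) → Prop)
    (hFeas : ∀ θ γ, Feas θ γ ↔ ((∀ u, 0 ≤ θ u) ∧ (∀ u, 0 ≤ γ u) ∧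
      (∑ u, θ u) ≤ 1 ∧
      (∀ b : β, (∑ u ∈ Finset.univ.filter (fun u => assoc u = b), γ u) ≤ 1) ∧
      ∀ u, 0 < R1 u * θ u + Rp u * γ u))
    (obj : (ι → ℝ) → (ι → ℝ) → ℝ)
    (hobj : ∀ θ γ, obj θ γ = ∑ u, Real.log (R1 u * θ u + Rp u * γ u))
    (M Mo : ℝ)
    (hM : IsGreatest {v : ℝ | ∃ θ γ, Feas θ γ ∧ v = obj θ γ} M)
    (hone : ∀ θ γ, Feas θ γ → obj θ γ = M →
      ∀ b : β, ∀ u v : ι, assoc u = b → assoc v = b →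
        0 < θ u → 0 < γ u → 0 < θ v → 0 < γ v → u = v)
    (hMo : IsGreatest {v : ℝ | ∃ θ γ, Feas θ γ ∧ (∀ u, θ u * γ u = 0) ∧
      v = obj θ γ} Mo) :
    M - Mo ≤ (min (Fintype.card β) (Fintype.card ι) : ℝ) * Real.log 2 := by
  classical
  obtain ⟨⟨θ, γ, hopt, rfl⟩, -⟩ := hM
  have hF : PFFeasible assoc R1 Rp θ γ := (hFeas θ γ).1 hopt
  have hsplit : #(splitUsers θ γ) ≤ min (Fintype.card β) (Fintype.card ι) := by
    refine card_le_min_card_of_injOn assoc fun u hu v hv huv => ?_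
    simp only [splitUsers, mem_coe, mem_filter_univ] at hu hv
    exact hone θ γ hopt rfl _ u v rfl huv.symm hu.1 hu.2 hv.1 hv.2
  have horth : obj (orthTheta R1 Rp θ γ) (orthGamma R1 Rp θ γ) ≤ Mo :=
    hMo.2 ⟨_, _, (hFeas _ _).2 hF.orthTheta_orthGamma, orthTheta_mul_orthGamma, rfl⟩
  have hloss := hF.sum_log_le_sum_log_orth_add
  rw [← hobj, ← hobj] at hloss
  have hcard : (#(splitUsers θ γ) : ℝ) * log 2 ≤
      (min (Fintype.card β) (Fintype.card ι) : ℝ) * log 2 :=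
    mul_le_mul_of_nonneg_right (by exact_mod_cast hsplit) (log_nonneg one_le_two)
  linarith

theorem orthogonal_split_loss {ι β : Type*} [Fintype ι] [Fintype β] [DecidableEq β]
    (assoc : ι → β)
    (R1 Rp : ι → ℝ) (hR1 : ∀ u, 0 < R1 u) (hRp : ∀ u, 0 < Rp u)
    (Feas : (ι → ℝ) → (ι → ℝ) → Prop)
    (hFeas : ∀ θ γ, Feas θ γ ↔ ((∀ u, 0 ≤ θ u) ∧ (∀ u, 0 ≤ γ u) ∧
      (∑ u, θ u) ≤ 1 ∧
      (∀ b : β, (∑ u ∈ Finset.univ.filter (fun u => assoc u = b), γ u) ≤ 1) ∧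
      ∀ u, 0 < R1 u * θ u + Rp u * γ u))
    (obj : (ι → ℝ) → (ι → ℝ) → ℝ)
    (hobj : ∀ θ γ, obj θ γ = ∑ u, Real.log (R1 u * θ u + Rp u * γ u))
    (M Mo : ℝ)
    (hM : IsGreatest {v : ℝ | ∃ θ γ, Feas θ γ ∧ v = obj θ γ} M)
    (hone : ∀ θ γ, Feas θ γ → obj θ γ = M →
      ∀ b : β, ∀ u v : ι, assoc u = b → assoc v = b →
        0 < θ u → 0 < γ u → 0 < θ v → 0 < γ v → u = v)
    (hMo : IsGreatest {v : ℝ | ∃ θ γ, Feas θ γ ∧ (∀ u, θ u * γ u = 0) ∧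
      v = obj θ γ} Mo) :
    M - Mo ≤ (min (Fintype.card β) (Fintype.card ι) : ℝ) * Real.log 2 :=
  orthogonal_split_loss_general assoc R1 Rp Feas hFeas obj hobj M Mo hM hone hMo
end
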